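/- For every δ > 0 there exists ε₀ > 0 such that for every ε with 0 < ε ≤ ε₀ the following holds. Let G be a finite simple graph with edge weights w : E(G) → ℝ satisfying w(e) ≥ 1 for all edges e, let L ∈ ℕ be such that w(e) < (1+ε)^L for all edges e, and for i = 0, …, L−1 let E_i = {e ∈ E(G) : w(e) ≥ (1+ε)^i} and let C_i be a maximal matching of the graph (V(G), E_i). Let T be the set produced by the greedy procedure applied to the concatenated list of the edges of C_{L−1}, then C_{L−2}, and so on down to C_0. Then T is a matching of G, and for every matching M of G one has w(M) ≤ (4+δ)·w(T), i.e., T is a (4+ε)-approximation of the maximum weighted matching of G. -/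

import Mathlib

/-- Two edges (as unordered pairs of vertices) share an endpoint. -/
def Shares {V : Type*} (e f : Sym2 V) : Prop := ∃ v, v ∈ e ∧ v ∈ f

/-- `M` is a matching whose edges are drawn from the edge set `E`:
no two distinct edges of `M` share an endpoint. -/
def IsMatchingOf {V : Type*} (E : Set (Sym2 V)) (M : Finset (Sym2 V)) : Prop :=
  (∀ e ∈ M, e ∈ E) ∧ ∀ e ∈ M, ∀ f ∈ M, e ≠ f → ¬ Shares e f

/-- `M` is a maximal matching of the edge set `E`: every edge of `E` not in `M`
shares an endpoint with some edge of `M`. -/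
def IsMaximalMatchingOf {V : Type*} (E : Set (Sym2 V)) (M : Finset (Sym2 V)) : Prop :=
  IsMatchingOf E M ∧ ∀ e ∈ E, e ∉ M → ∃ f ∈ M, Shares e f

open scoped Classical in
/-- The greedy procedure: process the edges of the list `l` in order, starting from `∅`,
and add an edge to the current set `T` iff neither of its endpoints is an endpoint of an
edge already in `T`. -/
noncomputable def greedy {V : Type*} (l : List (Sym2 V)) : Finset (Sym2 V) :=
  l.foldl (fun T e => if ∀ f ∈ T, ¬ Shares e f then insert e T else T) ∅

/-- The concatenated list of the edges of `C (L-1)`, then `C (L-2)`, …, down to `C 0`. -/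
noncomputable def concatDesc {V : Type*} (C : ℕ → Finset (Sym2 V)) (L : ℕ) :
    List (Sym2 V) :=
  (List.range L).reverse.flatMap fun i => (C i).toList

/-!
Write `M_i`, `T_i` for the edges of weight at least `(1+ε)^i` in `M` and `T`. The edges of
`M_i` form a matching inside `E_i`, so by maximality each meets an edge of `C_i`, and since an
edge meets at most two edges of a matching, `|M_i| ≤ 2|C_i|`. Every edge of `C_i` is blocked in
the greedy merge by an edge of `T` processed no later than itself, hence taken from some `C_j`
with `j ≥ i`, so `|C_i| ≤ 2|T_i|`. Thus `|M_i| ≤ 4|T_i|` at every level. Rounding each weight up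
to the next power of `1+ε` costs a factor `1+ε` and turns a weight into a nonnegative
combination of the level indicators, so the level-wise bounds add up to `w(M) ≤ 4(1+ε) w(T)`.
-/

section Matching

variable {V : Type*}

theorem shares_self (e : Sym2 V) : Shares e e := ⟨e.out.1, e.out_fst_mem, e.out_fst_mem⟩

theorem Shares.symm {e f : Sym2 V} : Shares e f → Shares f e
  | ⟨v, he, hf⟩ => ⟨v, hf, he⟩

/-- A matching all of whose edges meet an edge of `B` injects into the at most `2 * #B`
endpoints of `B`. -/
theorem card_le_two_mul_card_of_forall_shares {A B : Finset (Sym2 V)}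
    (hA : ∀ a ∈ A, ∀ a' ∈ A, a ≠ a' → ¬ Shares a a')
    (h : ∀ a ∈ A, ∃ b ∈ B, Shares a b) : A.card ≤ 2 * B.card := by
  classical
  have hvert : ∀ a, ∃ v, a ∈ A → v ∈ B.biUnion Sym2.toFinset ∧ v ∈ a := by
    intro a
    by_cases ha : a ∈ A
    · obtain ⟨b, hb, v, hva, hvb⟩ := h a ha
      exact ⟨v, fun _ => ⟨Finset.mem_biUnion.2 ⟨b, hb, Sym2.mem_toFinset.2 hvb⟩, hva⟩⟩
    · exact ⟨a.out.1, fun h => absurd h ha⟩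
  choose f hf using hvert
  calc A.card ≤ (B.biUnion Sym2.toFinset).card := by
        refine Finset.card_le_card_of_injOn f (fun a ha => (hf a ha).1) fun a ha a' ha' hfa => ?_
        by_contra hne
        exact hA a ha a' ha' hne ⟨f a, (hf a ha).2, hfa ▸ (hf a' ha').2⟩
    _ ≤ ∑ b ∈ B, (Sym2.toFinset b).card := Finset.card_biUnion_le
    _ ≤ ∑ _b ∈ B, 2 := Finset.sum_le_sum fun b _ => by
        rw [Sym2.card_toFinset]; split <;> norm_num
    _ = 2 * B.card := by rw [Finset.sum_const, smul_eq_mul, mul_comm]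

open scoped Classical in
noncomputable def greedyFrom (T : Finset (Sym2 V)) (l : List (Sym2 V)) : Finset (Sym2 V) :=
  l.foldl (fun T e => if ∀ f ∈ T, ¬ Shares e f then insert e T else T) T

theorem greedy_eq_greedyFrom (l : List (Sym2 V)) : greedy l = greedyFrom ∅ l := rfl

open scoped Classical in
theorem greedyFrom_cons (T : Finset (Sym2 V)) (e : Sym2 V) (l : List (Sym2 V)) :
    greedyFrom T (e :: l) =
      greedyFrom (if ∀ f ∈ T, ¬ Shares e f then insert e T else T) l := rfl

theorem greedyFrom_append (T : Finset (Sym2 V)) (l₁ l₂ : List (Sym2 V)) :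
    greedyFrom T (l₁ ++ l₂) = greedyFrom (greedyFrom T l₁) l₂ := List.foldl_append ..

theorem subset_greedyFrom (T : Finset (Sym2 V)) (l : List (Sym2 V)) : T ⊆ greedyFrom T l := by
  classical
  induction l generalizing T with
  | nil => exact subset_rfl
  | cons e l ih =>
    rw [greedyFrom_cons]
    split
    · exact (Finset.subset_insert e T).trans (ih _)
    · exact ih T

theorem mem_or_mem_of_mem_greedyFrom {T : Finset (Sym2 V)} {l : List (Sym2 V)} {a : Sym2 V}
    (h : a ∈ greedyFrom T l) : a ∈ T ∨ a ∈ l := by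
  classical
  induction l generalizing T with
  | nil => exact Or.inl h
  | cons e l ih =>
    rw [greedyFrom_cons] at h
    rcases ih h with hT | hl
    · split at hT
      · rcases Finset.mem_insert.mp hT with rfl | hT
        · exact Or.inr List.mem_cons_self
        · exact Or.inl hT
      · exact Or.inl hT
    · exact Or.inr (List.mem_cons_of_mem e hl)

theorem mem_of_mem_greedy {l : List (Sym2 V)} {a : Sym2 V} (h : a ∈ greedy l) : a ∈ l :=
  (mem_or_mem_of_mem_greedyFrom h).resolve_left (Finset.notMem_empty a)

theorem greedyFrom_pairwise_not_shares {T : Finset (Sym2 V)} (l : List (Sym2 V))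
    (hT : ∀ e ∈ T, ∀ f ∈ T, e ≠ f → ¬ Shares e f) :
    ∀ e ∈ greedyFrom T l, ∀ f ∈ greedyFrom T l, e ≠ f → ¬ Shares e f := by
  classical
  induction l generalizing T with
  | nil => exact hT
  | cons a l ih =>
    rw [greedyFrom_cons]
    refine ih ?_
    split
    · rename_i ha
      intro e he f hf hef
      rcases Finset.mem_insert.mp he with rfl | heT
      · rcases Finset.mem_insert.mp hf with rfl | hfT
        · exact absurd rfl hef
        · exact ha f hfT
      · rcases Finset.mem_insert.mp hf with rfl | hfT
        · exact fun hs => ha e heT hs.symm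
        · exact hT e heT f hfT hef
    · exact hT

theorem exists_mem_greedyFrom_shares {T : Finset (Sym2 V)} {l : List (Sym2 V)} {e : Sym2 V}
    (he : e ∈ l) : ∃ g ∈ greedyFrom T l, Shares e g := by
  classical
  induction l generalizing T with
  | nil => exact absurd he List.not_mem_nil
  | cons a l ih =>
    rw [greedyFrom_cons]
    rcases List.mem_cons.mp he with rfl | he
    · by_cases hfree : ∀ f ∈ T, ¬ Shares e f
      · rw [if_pos hfree]
        exact ⟨e, subset_greedyFrom _ _ (Finset.mem_insert_self e T), shares_self e⟩
      · rw [if_neg hfree]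
        push Not at hfree
        obtain ⟨f, hf, hs⟩ := hfree
        exact ⟨f, subset_greedyFrom _ _ hf, hs⟩
    · exact ih he

theorem exists_mem_greedy_append_shares {l₁ l₂ : List (Sym2 V)} {e : Sym2 V} (he : e ∈ l₁) :
    ∃ g ∈ greedy (l₁ ++ l₂), g ∈ l₁ ∧ Shares e g := by
  obtain ⟨g, hg, hs⟩ := exists_mem_greedyFrom_shares (T := ∅) he
  rw [greedy_eq_greedyFrom, greedyFrom_append]
  exact ⟨g, subset_greedyFrom _ _ hg, mem_of_mem_greedy hg, hs⟩

theorem greedy_pairwise_not_shares (l : List (Sym2 V)) :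
    ∀ e ∈ greedy l, ∀ f ∈ greedy l, e ≠ f → ¬ Shares e f :=
  greedyFrom_pairwise_not_shares l (by simp)

theorem concatDesc_succ (C : ℕ → Finset (Sym2 V)) (L : ℕ) :
    concatDesc C (L + 1) = (C L).toList ++ concatDesc C L := by
  simp [concatDesc, List.range_succ]

theorem mem_concatDesc {C : ℕ → Finset (Sym2 V)} {L : ℕ} {e : Sym2 V} :
    e ∈ concatDesc C L ↔ ∃ i < L, e ∈ C i := by
  simp [concatDesc, List.mem_flatMap]

theorem exists_concatDesc_eq_append (C : ℕ → Finset (Sym2 V)) {i L : ℕ} (hi : i < L) :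
    ∃ l₁ l₂, concatDesc C L = l₁ ++ l₂ ∧ (∀ e ∈ C i, e ∈ l₁) ∧
      ∀ e ∈ l₁, ∃ j, i ≤ j ∧ j < L ∧ e ∈ C j := by
  induction L with
  | zero => omega
  | succ L ih =>
    rw [concatDesc_succ]
    rcases (Nat.lt_succ_iff_lt_or_eq.mp hi) with hi | rfl
    · obtain ⟨l₁, l₂, hl, hCl, hl₁⟩ := ih hi
      refine ⟨(C L).toList ++ l₁, l₂, by rw [hl, List.append_assoc], fun e he => ?_, ?_⟩
      · exact List.mem_append_right _ (hCl e he)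
      · intro e he
        rcases List.mem_append.mp he with he | he
        · exact ⟨L, hi.le, L.lt_succ_self, Finset.mem_toList.mp he⟩
        · obtain ⟨j, hij, hjL, hej⟩ := hl₁ e he
          exact ⟨j, hij, hjL.trans L.lt_succ_self, hej⟩
    · exact ⟨_, _, rfl, fun e he => Finset.mem_toList.mpr he,
        fun e he => ⟨i, le_rfl, i.lt_succ_self, Finset.mem_toList.mp he⟩⟩

theorem exists_mem_greedy_concatDesc_shares {C : ℕ → Finset (Sym2 V)} {i L : ℕ} (hi : i < L)
    {e : Sym2 V} (he : e ∈ C i) :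
    ∃ g ∈ greedy (concatDesc C L), Shares e g ∧ ∃ j, i ≤ j ∧ j < L ∧ g ∈ C j := by
  obtain ⟨l₁, l₂, hl, hCl, hl₁⟩ := exists_concatDesc_eq_append C hi
  obtain ⟨g, hg, hgl, hs⟩ := exists_mem_greedy_append_shares (l₂ := l₂) (hCl e he)
  exact ⟨g, hl ▸ hg, hs, hl₁ g hgl⟩

theorem IsMatchingOf.filter {E : Set (Sym2 V)} {M : Finset (Sym2 V)} (hM : IsMatchingOf E M)
    (p : Sym2 V → Prop) [DecidablePred p] : IsMatchingOf {e ∈ E | p e} (M.filter p) :=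
  ⟨fun e he => ⟨hM.1 e (Finset.mem_filter.1 he).1, (Finset.mem_filter.1 he).2⟩,
    fun e he f hf => hM.2 e (Finset.mem_filter.1 he).1 f (Finset.mem_filter.1 hf).1⟩

theorem IsMaximalMatchingOf.card_le_two_mul {E : Set (Sym2 V)} {A C : Finset (Sym2 V)}
    (hC : IsMaximalMatchingOf E C) (hA : IsMatchingOf E A) : A.card ≤ 2 * C.card := by
  refine card_le_two_mul_card_of_forall_shares hA.2 fun a ha => ?_
  by_cases haC : a ∈ C
  · exact ⟨a, haC, shares_self a⟩
  · exact hC.2 a (hA.1 a ha) haC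

theorem card_le_two_mul_card_filter_greedy_concatDesc {C : ℕ → Finset (Sym2 V)} {i L : ℕ}
    (hi : i < L) (hCi : ∀ e ∈ C i, ∀ f ∈ C i, e ≠ f → ¬ Shares e f)
    {w : Sym2 V → ℝ} {t : ℕ → ℝ} (ht : Monotone t) (hCw : ∀ j < L, ∀ g ∈ C j, t j ≤ w g) :
    (C i).card ≤ 2 * ((greedy (concatDesc C L)).filter (t i ≤ w ·)).card := by
  refine card_le_two_mul_card_of_forall_shares hCi fun e he => ?_
  obtain ⟨g, hg, hs, j, hij, hjL, hgj⟩ := exists_mem_greedy_concatDesc_shares hi he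
  exact ⟨g, Finset.mem_filter.2 ⟨hg, (ht hij).trans (hCw j hjL g hgj)⟩, hs⟩

end Matching

section Rounding

open Finset

variable {b : ℝ}

def layerWeight (b : ℝ) (i : ℕ) : ℝ := if i = 0 then b else (b - 1) * b ^ i

theorem sum_range_succ_layerWeight (b : ℝ) (n : ℕ) :
    ∑ i ∈ range (n + 1), layerWeight b i = b ^ (n + 1) := by
  induction n with
  | zero => simp [layerWeight]
  | succ n ih =>
    rw [sum_range_succ, ih, layerWeight, if_neg n.succ_ne_zero]
    ring

theorem layerWeight_nonneg (hb : 1 ≤ b) (i : ℕ) : 0 ≤ layerWeight b i := by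
  unfold layerWeight
  split
  · linarith
  · exact mul_nonneg (by linarith) (pow_nonneg (by linarith) i)

/-- `x ≥ 1` rounded up to the next power of `b`, written as a sum over the levels `b ^ i ≤ x`
so that rounded weights can be summed level by level. -/
noncomputable def roundUp (b : ℝ) (L : ℕ) (x : ℝ) : ℝ :=
  ∑ i ∈ range L, if b ^ i ≤ x then layerWeight b i else 0

theorem roundUp_eq_pow (hb : 1 < b) {L ℓ : ℕ} {x : ℝ} (hℓL : ℓ < L) (h₁ : b ^ ℓ ≤ x)
    (h₂ : x < b ^ (ℓ + 1)) : roundUp b L x = b ^ (ℓ + 1) := by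
  have hlevels : (range L).filter (b ^ · ≤ x) = range (ℓ + 1) := by
    ext i
    simp only [mem_filter, mem_range]
    constructor
    · rintro ⟨-, hi⟩
      exact (pow_lt_pow_iff_right₀ hb).1 (hi.trans_lt h₂)
    · intro hi
      exact ⟨by omega, (pow_le_pow_right₀ hb.le (by omega)).trans h₁⟩
  rw [roundUp, ← sum_filter, hlevels, sum_range_succ_layerWeight]

theorem le_roundUp_and_roundUp_le (hb : 1 < b) {L : ℕ} {x : ℝ} (h₁ : 1 ≤ x) (h₂ : x < b ^ L) :
    x ≤ roundUp b L x ∧ roundUp b L x ≤ b * x := by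
  obtain ⟨ℓ, hℓ, hxℓ⟩ := exists_nat_pow_near h₁ hb
  have hℓL : ℓ < L := (pow_lt_pow_iff_right₀ hb).1 (hℓ.trans_lt h₂)
  rw [roundUp_eq_pow hb hℓL hℓ hxℓ]
  refine ⟨hxℓ.le, ?_⟩
  rw [pow_succ']
  exact mul_le_mul_of_nonneg_left hℓ (by linarith)

theorem sum_roundUp_eq {α : Type*} (s : Finset α) (w : α → ℝ) (L : ℕ) :
    ∑ e ∈ s, roundUp b L (w e) = ∑ i ∈ range L, layerWeight b i * #(s.filter (b ^ i ≤ w ·)) := by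
  simp only [roundUp]
  rw [sum_comm]
  refine sum_congr rfl fun i _ => ?_
  rw [← sum_filter, sum_const, nsmul_eq_mul, mul_comm]

theorem sum_roundUp_le_of_card_filter_le {α : Type*} (hb : 1 ≤ b) {M T : Finset α}
    {w : α → ℝ} {L c : ℕ}
    (hcard : ∀ i < L, #(M.filter (b ^ i ≤ w ·)) ≤ c * #(T.filter (b ^ i ≤ w ·))) :
    ∑ e ∈ M, roundUp b L (w e) ≤ c * ∑ e ∈ T, roundUp b L (w e) := by
  rw [sum_roundUp_eq, sum_roundUp_eq, mul_sum]
  refine sum_le_sum fun i hi => ?_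
  calc layerWeight b i * #(M.filter (b ^ i ≤ w ·))
      ≤ layerWeight b i * (c * #(T.filter (b ^ i ≤ w ·))) :=
        mul_le_mul_of_nonneg_left (by exact_mod_cast hcard i (mem_range.1 hi))
          (layerWeight_nonneg hb i)
    _ = c * (layerWeight b i * #(T.filter (b ^ i ≤ w ·))) := by ring

theorem sum_le_mul_sum_of_card_filter_le {α : Type*} (hb : 1 < b) {M T : Finset α}
    {w : α → ℝ} {L c : ℕ} (hM : ∀ e ∈ M, 1 ≤ w e ∧ w e < b ^ L)
    (hT : ∀ e ∈ T, 1 ≤ w e ∧ w e < b ^ L)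
    (hcard : ∀ i < L, #(M.filter (b ^ i ≤ w ·)) ≤ c * #(T.filter (b ^ i ≤ w ·))) :
    ∑ e ∈ M, w e ≤ c * b * ∑ e ∈ T, w e :=
  calc ∑ e ∈ M, w e ≤ ∑ e ∈ M, roundUp b L (w e) :=
        sum_le_sum fun e he => (le_roundUp_and_roundUp_le hb (hM e he).1 (hM e he).2).1
    _ ≤ c * ∑ e ∈ T, roundUp b L (w e) := sum_roundUp_le_of_card_filter_le hb.le hcard
    _ ≤ c * ∑ e ∈ T, b * w e := mul_le_mul_of_nonneg_left
        (sum_le_sum fun e he => (le_roundUp_and_roundUp_le hb (hT e he).1 (hT e he).2).2)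
        c.cast_nonneg
    _ = c * b * ∑ e ∈ T, w e := by rw [← mul_sum, mul_assoc]

end Rounding

/-- **The Crouch–Stubbs `(4+ε)`-approximation.**  For every `δ > 0` there is `ε₀ > 0`
such that for all `0 < ε ≤ ε₀` the following holds.  Let `G` be a finite simple graph
with edge weights `w(e) ≥ 1`, let `L` satisfy `w(e) < (1+ε)^L` for all edges, let `C i`
be a maximal matching of the substream `E_i = {e ∈ E(G) : w(e) ≥ (1+ε)^i}` for each
`i < L`, and let `T` be the greedy merge of `C (L-1), …, C 0`.  Then `T` is a matching
of `G` and `w(M) ≤ (4+δ) · w(T)` for every matching `M` of `G`. -/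
theorem crouch_stubbs_approximation :
    ∀ δ : ℝ, 0 < δ → ∃ ε₀ : ℝ, 0 < ε₀ ∧ ∀ ε : ℝ, 0 < ε → ε ≤ ε₀ →
      ∀ (V : Type) [Fintype V] (G : SimpleGraph V) (w : Sym2 V → ℝ) (L : ℕ)
        (C : ℕ → Finset (Sym2 V)),
        (∀ e ∈ G.edgeSet, 1 ≤ w e) →
        (∀ e ∈ G.edgeSet, w e < (1 + ε) ^ L) →
        (∀ i < L, IsMaximalMatchingOf {e | e ∈ G.edgeSet ∧ (1 + ε) ^ i ≤ w e} (C i)) →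
        IsMatchingOf G.edgeSet (greedy (concatDesc C L)) ∧
        ∀ M : Finset (Sym2 V), IsMatchingOf G.edgeSet M →
          ∑ e ∈ M, w e ≤ (4 + δ) * ∑ e ∈ greedy (concatDesc C L), w e := by
  intro δ hδ
  refine ⟨δ / 4, by positivity, fun ε hε hεδ V _ G w L C hw₁ hwL hC => ?_⟩
  set T := greedy (concatDesc C L)
  have hb : 1 < 1 + ε := by linarith
  have hCw : ∀ j < L, ∀ g ∈ C j, g ∈ G.edgeSet ∧ (1 + ε) ^ j ≤ w g :=
    fun j hj g hg => (hC j hj).1.1 g hg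
  have hTG : ∀ g ∈ T, g ∈ G.edgeSet := fun g hg => by
    obtain ⟨j, hj, hgj⟩ := mem_concatDesc.1 (mem_of_mem_greedy hg)
    exact (hCw j hj g hgj).1
  refine ⟨⟨hTG, greedy_pairwise_not_shares _⟩, fun M hM => ?_⟩
  have hlevel : ∀ i < L, (M.filter ((1 + ε) ^ i ≤ w ·)).card ≤
      4 * (T.filter ((1 + ε) ^ i ≤ w ·)).card := fun i hi =>
    calc (M.filter ((1 + ε) ^ i ≤ w ·)).card ≤ 2 * (C i).card :=
          (hC i hi).card_le_two_mul (hM.filter _)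
      _ ≤ 2 * (2 * (T.filter ((1 + ε) ^ i ≤ w ·)).card) := Nat.mul_le_mul_left 2
          (card_le_two_mul_card_filter_greedy_concatDesc hi (hC i hi).1.2
            (pow_right_mono₀ hb.le) fun j hj g hg => (hCw j hj g hg).2)
      _ = 4 * (T.filter ((1 + ε) ^ i ≤ w ·)).card := by ring
  have hTw : 0 ≤ ∑ g ∈ T, w g := Finset.sum_nonneg fun g hg => zero_le_one.trans (hw₁ g (hTG g hg))
  calc ∑ e ∈ M, w e ≤ ((4 : ℕ) : ℝ) * (1 + ε) * ∑ g ∈ T, w g :=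
        sum_le_mul_sum_of_card_filter_le hb (fun e he => ⟨hw₁ e (hM.1 e he), hwL e (hM.1 e he)⟩)
          (fun g hg => ⟨hw₁ g (hTG g hg), hwL g (hTG g hg)⟩) hlevel
    _ ≤ (4 + δ) * ∑ g ∈ T, w g := mul_le_mul_of_nonneg_right (by push_cast; linarith) hTw
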